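/- Suppose every project has unit cost (cost(p)=1 for all p∈A) and every voter's marginal utilities are strictly positive (u_{i,g}(k) > 0 for all i∈V, g∈v_i, and all k); then the Substitute Rule X (SRX) mechanism satisfies Strong-BPJR with substitutes: for every such PB instance and every group S⊆V that is T-cohesive with substitutes for T⊆A, the output bundle B of SRX satisfies |(∪_{i∈S} A(i)) ∩ B| ≥ |T|. -/

import Mathlib

open Finset

/-- A voter's preference: a partition of her desired projects into groups of
substitutes, together with a marginal utility function per group
(`margU g j` is the marginal utility of the `j`-th funded project of group `g`). -/
structure VoterPref (A : Type*) [DecidableEq A] where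
  parts : Finset (Finset A)
  margU : Finset A → ℕ → ℝ

namespace VoterPref

variable {A : Type*} [DecidableEq A]

/-- `A(i)` : the set of desired projects of the voter. -/
def desired (v : VoterPref A) : Finset A := v.parts.sup id

/-- Well-formedness: groups are nonempty and pairwise disjoint, and marginal
utilities are nonnegative and nonincreasing. -/
def Valid (v : VoterPref A) : Prop :=
  (∀ g ∈ v.parts, g.Nonempty) ∧
  (∀ g₁ ∈ v.parts, ∀ g₂ ∈ v.parts, g₁ ≠ g₂ → Disjoint g₁ g₂) ∧
  (∀ g ∈ v.parts, ∀ j : ℕ, 0 ≤ v.margU g j) ∧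
  (∀ g ∈ v.parts, ∀ j : ℕ, v.margU g (j + 1) ≤ v.margU g j)

/-- The utility of a bundle `B`:  `u_i(B) = Σ_{g} Σ_{j=1}^{|g∩B|} u_{i,g}(j)`. -/
def util (v : VoterPref A) (B : Finset A) : ℝ :=
  ∑ g ∈ v.parts, ∑ j ∈ Finset.Icc 1 (g ∩ B).card, v.margU g j

/-- Marginal utility of project `p` given the already selected bundle `B`. -/
def margUtil (v : VoterPref A) (B : Finset A) (p : A) : ℝ :=
  v.util (insert p B) - v.util B

/-- `p₁` and `p₂` are substitutes for the voter. -/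
def sameGroup (v : VoterPref A) (p₁ p₂ : A) : Prop :=
  ∃ g ∈ v.parts, p₁ ∈ g ∧ p₂ ∈ g

end VoterPref

/-- A participatory budgeting instance `E = (V, A, cost, L)` together with the
voters' preferences. -/
structure PB (V A : Type*) [DecidableEq A] where
  cost : A → ℝ
  budget : ℝ
  pref : V → VoterPref A

noncomputable section
open scoped Classical

variable {V A : Type*} [Fintype V] [Fintype A] [DecidableEq A]

/-- `S` is `T`-cohesive with substitutes: `S` can afford `T` with its share of
the budget, every voter in `S` desires every project of `T`, and no two
distinct projects of `T` are substitutes for any voter of `S`. -/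
def TCohesiveSub (E : PB V A) (S : Finset V) (T : Finset A) : Prop :=
  (∑ p ∈ T, E.cost p) ≤ (E.budget / (Fintype.card V : ℝ)) * S.card ∧
  (∀ i ∈ S, T ⊆ (E.pref i).desired) ∧
  (∀ i ∈ S, ∀ p₁ ∈ T, ∀ p₂ ∈ T, p₁ ≠ p₂ → ¬ (E.pref i).sameGroup p₁ p₂)

/-- `p` is `q`-affordable given remaining budgets `b` and current utilities `U`. -/
def Affordable (E : PB V A) (U : V → A → ℝ) (b : V → ℝ) (p : A) (q : ℝ) : Prop :=
  0 ≤ q ∧ E.cost p ≤ ∑ i, min (b i) (U i p * q)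

/-- The minimal `q` for which `p` is `q`-affordable (junk value if none exists). -/
def qmin (E : PB V A) (U : V → A → ℝ) (b : V → ℝ) (p : A) : ℝ :=
  sInf {q | Affordable E U b p q}

/-- The set of unselected projects that are `q`-affordable for some `q`. -/
def affordSet (E : PB V A) (U : V → A → ℝ) (b : V → ℝ) (B : Finset A) : Finset A :=
  Finset.univ.filter fun p => p ∉ B ∧ ∃ q, Affordable E U b p q

/-- The project chosen at the current step: among affordable unselected
projects, minimize the minimal `q`, breaking ties by the (lexicographic)
linear order on `A`; `none` if no project is affordable. -/
def choice [LinearOrder A] (E : PB V A) (U : V → A → ℝ) (b : V → ℝ) (B : Finset A) :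
    Option A :=
  if h : (affordSet E U b B).Nonempty then
    some (((affordSet E U b B).filter fun p =>
        qmin E U b p = (affordSet E U b B).inf' h (qmin E U b)).min'
      (by
        obtain ⟨p, hp, hq⟩ := Finset.exists_mem_eq_inf' h (qmin E U b)
        exact ⟨p, Finset.mem_filter.mpr ⟨hp, hq.symm⟩⟩))
  else none

/-- The state (selected bundle, remaining budgets) of the generalized Rule X
after `t` steps, where `Ufun B i p` is the utility voter `i` assigns to project
`p` when the bundle `B` has already been selected. -/
def state [LinearOrder A] (E : PB V A) (Ufun : Finset A → V → A → ℝ) :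
    ℕ → Finset A × (V → ℝ)
  | 0 => (∅, fun _ => E.budget / (Fintype.card V : ℝ))
  | t + 1 =>
    let st := state E Ufun t
    match choice E (Ufun st.1) st.2 st.1 with
    | none => st
    | some p =>
        (insert p st.1,
          fun i => st.2 i - min (st.2 i) (Ufun st.1 i p * qmin E (Ufun st.1) st.2 p))

/-- The output of the generalized Rule X (after `|A|` steps the state is final). -/
def mechOutput [LinearOrder A] (E : PB V A) (Ufun : Finset A → V → A → ℝ) : Finset A :=
  (state E Ufun (Fintype.card A)).1

/-- SRX uses, at every step, the current marginal utilities. -/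
def srxU (E : PB V A) : Finset A → V → A → ℝ := fun B i p => (E.pref i).margUtil B p

/-- The Substitute Rule X mechanism. -/
def SRX [LinearOrder A] (E : PB V A) : Finset A := mechOutput E (srxU E)

/-- Rule X uses, throughout, utility 1 for every desired project. -/
def rxU (E : PB V A) : Finset A → V → A → ℝ :=
  fun _ i p => if p ∈ (E.pref i).desired then 1 else 0

/-- The (original) Rule X mechanism. -/
def RX [LinearOrder A] (E : PB V A) : Finset A := mechOutput E (rxU E)

/-- Global substitutes: all voters share one common partition `P` of the whole
project set, each voter approving a sub-collection of its groups. -/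
def GlobalSubs (E : PB V A) (P : Finset (Finset A)) : Prop :=
  (∀ g ∈ P, g.Nonempty) ∧
  (∀ g₁ ∈ P, ∀ g₂ ∈ P, g₁ ≠ g₂ → Disjoint g₁ g₂) ∧
  P.sup id = Finset.univ ∧
  (∀ i : V, (E.pref i).parts ⊆ P)

end

/-!
Let `D = ⋃_{i ∈ S} A(i)`. Voters of `S` have zero marginal utility outside `D`, so they pay
nothing for such projects, and a project bought at the least affordable price costs its
payers at most its unit cost in total. Hence when SRX stops, `S` still holds at least
`|S| L / n - |D ∩ B| ≥ |T| - |D ∩ B|`. If `|D ∩ B| < |T|`, this is at least `1`, some project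
of `T ⊆ D` is unselected, and every voter of `S` has positive marginal utility for it, so it
would still be affordable, contradicting termination.
-/

open Filter Topology

namespace VoterPref

variable {A : Type*} [DecidableEq A]

theorem margUtil_eq_sum_sdiff (v : VoterPref A) (B : Finset A) (p : A) :
    v.margUtil B p = ∑ g ∈ v.parts,
      ∑ j ∈ Icc 1 (g ∩ insert p B).card \ Icc 1 (g ∩ B).card, v.margU g j := by
  unfold margUtil util
  rw [← sum_sub_distrib]
  refine sum_congr rfl fun g _ => (sum_sdiff_eq_sub ?_).symm
  exact Icc_subset_Icc_right (card_le_card (inter_subset_inter_left (subset_insert p B)))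

theorem margUtil_nonneg {v : VoterPref A} (hv : ∀ g ∈ v.parts, ∀ j, 0 ≤ v.margU g j)
    (B : Finset A) (p : A) : 0 ≤ v.margUtil B p := by
  rw [margUtil_eq_sum_sdiff]
  exact sum_nonneg fun g hg => sum_nonneg fun j _ => hv g hg j

theorem margUtil_pos {v : VoterPref A} (hv : ∀ g ∈ v.parts, ∀ j, 0 < v.margU g j)
    {B : Finset A} {p : A} (hp : p ∈ v.desired) (hpB : p ∉ B) : 0 < v.margUtil B p := by
  obtain ⟨g, hg, hpg : p ∈ g⟩ := mem_sup.mp hp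
  have hcard : (g ∩ insert p B).card = (g ∩ B).card + 1 := by
    rw [inter_insert_of_mem hpg, card_insert_of_notMem fun h => hpB (mem_inter.mp h).2]
  rw [margUtil_eq_sum_sdiff]
  refine sum_pos' (fun g hg => sum_nonneg fun j _ => (hv g hg j).le) ⟨g, hg, ?_⟩
  exact sum_pos (fun j _ => hv g hg j) ⟨(g ∩ B).card + 1, by simp [hcard]⟩

theorem margUtil_eq_zero_of_notMem_desired {v : VoterPref A} {p : A} (hp : p ∉ v.desired)
    (B : Finset A) : v.margUtil B p = 0 := by
  unfold margUtil util
  refine sub_eq_zero.mpr (sum_congr rfl fun g hg => ?_)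
  rw [inter_insert_of_notMem fun hpg : p ∈ g => hp (mem_sup.mpr ⟨g, hg, hpg⟩)]

end VoterPref

section RuleX

variable {V A : Type*} [Fintype V] [DecidableEq A]
  {E : PB V A} {U : V → A → ℝ} {b : V → ℝ} {B : Finset A} {p : A}

/-- The charge `c_i` of voter `i` when `p` is bought. -/
noncomputable def payment (E : PB V A) (U : V → A → ℝ) (b : V → ℝ) (p : A) (i : V) : ℝ :=
  min (b i) (U i p * qmin E U b p)

theorem qmin_nonneg (h : ∃ q, Affordable E U b p q) : 0 ≤ qmin E U b p :=
  le_csInf h fun _ hq => hq.1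

theorem payment_nonneg (h : ∃ q, Affordable E U b p q) {i : V} (hb : 0 ≤ b i)
    (hU : 0 ≤ U i p) : 0 ≤ payment E U b p i :=
  le_min hb (mul_nonneg hU (qmin_nonneg h))

/-- The total charge is continuous in the price, so if it exceeded the cost at `qmin`, a slightly
smaller price would be affordable. -/
theorem sum_payment_le_cost (hc : 0 ≤ E.cost p) (h : ∃ q, Affordable E U b p q) :
    ∑ i, payment E U b p i ≤ E.cost p := by
  set f : ℝ → ℝ := fun q => ∑ i, min (b i) (U i p * q)
  change f (qmin E U b p) ≤ E.cost p
  by_contra! hlt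
  have hq₀ : 0 < qmin E U b p := by
    refine (qmin_nonneg h).lt_of_ne fun h₀ => ?_
    have hf₀ : f 0 ≤ 0 := sum_nonpos fun i _ => by simp
    rw [← h₀] at hlt
    linarith
  have hf : Continuous f := by fun_prop
  have hnear : ∀ᶠ q in 𝓝[<] qmin E U b p, E.cost p < f q :=
    (hf.tendsto _).mono_left nhdsWithin_le_nhds |>.eventually_const_lt hlt
  obtain ⟨q, hcost, hq⟩ := (hnear.and (Ioo_mem_nhdsLT hq₀)).exists
  exact hq.2.not_ge (csInf_le ⟨0, fun _ hq => hq.1⟩ ⟨hq.1.le, hcost.le⟩)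

theorem exists_affordable_of_cost_le_sum {S : Finset V} (hb : ∀ i, 0 ≤ b i)
    (hU : ∀ i, 0 ≤ U i p) (hS : ∀ i ∈ S, 0 < U i p) (hc : E.cost p ≤ ∑ i ∈ S, b i) :
    ∃ q, Affordable E U b p q := by
  set q := ∑ j ∈ S, b j / U j p
  have hq : 0 ≤ q := sum_nonneg fun j hj => div_nonneg (hb j) (hS j hj).le
  have hpaid : ∀ i ∈ S, b i ≤ U i p * q := fun i hi =>
    calc b i = U i p * (b i / U i p) := (mul_div_cancel₀ _ (hS i hi).ne').symm
      _ ≤ U i p * q := mul_le_mul_of_nonneg_left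
          (single_le_sum (fun j hj => div_nonneg (hb j) (hS j hj).le) hi) (hU i)
  refine ⟨q, hq, ?_⟩
  calc E.cost p ≤ ∑ i ∈ S, b i := hc
    _ = ∑ i ∈ S, min (b i) (U i p * q) :=
          sum_congr rfl fun i hi => (min_eq_left (hpaid i hi)).symm
    _ ≤ ∑ i, min (b i) (U i p * q) := sum_le_sum_of_subset_of_nonneg (subset_univ S)
          fun i _ _ => le_min (hb i) (mul_nonneg (hU i) hq)

variable [Fintype A]

theorem mem_affordSet : p ∈ affordSet E U b B ↔ p ∉ B ∧ ∃ q, Affordable E U b p q := by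
  simp [affordSet]

variable [LinearOrder A]

theorem affordSet_eq_empty_of_choice_eq_none (h : choice E U b B = none) :
    affordSet E U b B = ∅ := by
  unfold choice at h
  split_ifs at h with hne
  exact not_nonempty_iff_eq_empty.mp hne

theorem mem_affordSet_of_choice_eq_some (h : choice E U b B = some p) :
    p ∈ affordSet E U b B := by
  unfold choice at h
  split_ifs at h
  cases h
  exact (mem_filter.mp (min'_mem _ _)).1

variable (Ufun : Finset A → V → A → ℝ) {t : ℕ}

theorem state_succ_of_choice_eq_none
    (h : choice E (Ufun (state E Ufun t).1) (state E Ufun t).2 (state E Ufun t).1 = none) :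
    state E Ufun (t + 1) = state E Ufun t := by
  simp only [state, h]

theorem state_succ_of_choice_eq_some
    (h : choice E (Ufun (state E Ufun t).1) (state E Ufun t).2 (state E Ufun t).1 = some p) :
    state E Ufun (t + 1) = (insert p (state E Ufun t).1,
      (state E Ufun t).2 - payment E (Ufun (state E Ufun t).1) (state E Ufun t).2 p) := by
  simp only [state, h]
  rfl

theorem state_induction (P : Finset A × (V → ℝ) → Prop)
    (h₀ : P (∅, fun _ => E.budget / Fintype.card V))
    (hstep : ∀ B b p, p ∈ affordSet E (Ufun B) b B → P (B, b) →
      P (insert p B, b - payment E (Ufun B) b p)) (t : ℕ) :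
    P (state E Ufun t) := by
  induction t with
  | zero => exact h₀
  | succ t ih =>
    rcases h : choice E (Ufun (state E Ufun t).1) (state E Ufun t).2 (state E Ufun t).1
      with _ | p
    · rwa [state_succ_of_choice_eq_none Ufun h]
    · rw [state_succ_of_choice_eq_some Ufun h]
      exact hstep _ _ _ (mem_affordSet_of_choice_eq_some h) ih

theorem choice_state_eq_none_or_le_card (t : ℕ) :
    choice E (Ufun (state E Ufun t).1) (state E Ufun t).2 (state E Ufun t).1 = none ∨
      t ≤ (state E Ufun t).1.card := by
  induction t with
  | zero => exact Or.inr (Nat.zero_le _)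
  | succ t ih =>
    rcases h : choice E (Ufun (state E Ufun t).1) (state E Ufun t).2 (state E Ufun t).1
      with _ | p
    · rw [state_succ_of_choice_eq_none Ufun h]
      exact Or.inl h
    · have hpB := (mem_affordSet.mp (mem_affordSet_of_choice_eq_some h)).1
      rw [state_succ_of_choice_eq_some Ufun h, card_insert_of_notMem hpB]
      exact Or.inr (by simpa [h] using ih)

theorem not_affordable_of_notMem_mechOutput (hp : p ∉ mechOutput E Ufun) :
    ¬ ∃ q, Affordable E (Ufun (mechOutput E Ufun)) (state E Ufun (Fintype.card A)).2 p q := by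
  intro hq
  rcases choice_state_eq_none_or_le_card Ufun (Fintype.card A) with h | h
  · exact not_nonempty_iff_eq_empty.mpr (affordSet_eq_empty_of_choice_eq_none h)
      ⟨p, mem_affordSet.mpr ⟨hp, hq⟩⟩
  · unfold mechOutput at hp
    rw [eq_univ_of_card _ (le_antisymm (card_le_univ _) h)] at hp
    exact hp (mem_univ p)

variable {Ufun}

theorem state_budget_nonneg (hL : 0 ≤ E.budget) (t : ℕ) (i : V) :
    0 ≤ (state E Ufun t).2 i :=
  state_induction Ufun (fun st => ∀ i, 0 ≤ st.2 i) (fun _ => div_nonneg hL (Nat.cast_nonneg _))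
    (fun _ _ _ _ _ _ => sub_nonneg.mpr (min_le_left _ _)) t i

theorem sum_state_budget_ge {S : Finset V} {D : Finset A} (hL : 0 ≤ E.budget)
    (hcost : ∀ p, 0 ≤ E.cost p) (hU : ∀ B i p, 0 ≤ Ufun B i p)
    (hD : ∀ B, ∀ i ∈ S, ∀ p ∉ D, Ufun B i p = 0) (t : ℕ) :
    S.card * (E.budget / Fintype.card V) - ∑ p ∈ D ∩ (state E Ufun t).1, E.cost p ≤
      ∑ i ∈ S, (state E Ufun t).2 i := by
  refine (state_induction Ufun (fun st => (∀ i, 0 ≤ st.2 i) ∧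
      S.card * (E.budget / Fintype.card V) - ∑ p ∈ D ∩ st.1, E.cost p ≤ ∑ i ∈ S, st.2 i)
    ⟨fun _ => div_nonneg hL (Nat.cast_nonneg _), by simp⟩ ?_ t).2
  rintro B b p hp ⟨hb, hspent⟩
  obtain ⟨hpB, hex⟩ := mem_affordSet.mp hp
  refine ⟨fun i => sub_nonneg.mpr (min_le_left _ _), ?_⟩
  simp only [Pi.sub_apply, sum_sub_distrib]
  by_cases hpD : p ∈ D
  · have hpaid : ∑ i ∈ S, payment E (Ufun B) b p i ≤ E.cost p :=
      (sum_le_sum_of_subset_of_nonneg (subset_univ S) fun i _ _ =>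
        payment_nonneg hex (hb i) (hU B i p)).trans (sum_payment_le_cost (hcost p) hex)
    rw [inter_insert_of_mem hpD, sum_insert fun h => hpB (mem_inter.mp h).2]
    linarith
  · have hfree : ∀ i ∈ S, payment E (Ufun B) b p i = 0 := fun i hi => by
      simp only [payment, hD B i hi p hpD, zero_mul, min_eq_right (hb i)]
    rw [inter_insert_of_notMem hpD, sum_congr rfl hfree, sum_const_zero, sub_zero]
    exact hspent

end RuleX

theorem srx_StrongBPJR_under_unit_cost_general
    {V A : Type*} [Fintype V] [Fintype A] [DecidableEq A] [LinearOrder A]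
    (E : PB V A)
    (hbudget : 0 < E.budget)
    (hunit : ∀ p : A, E.cost p = 1)
    (hpos : ∀ i : V, ∀ g ∈ (E.pref i).parts, ∀ k : ℕ, 0 < (E.pref i).margU g k)
    (S : Finset V) (T : Finset A)
    (hco : TCohesiveSub E S T) :
    T.card ≤ ((S.biUnion fun i => (E.pref i).desired) ∩ SRX E).card := by
  set D := S.biUnion fun i => (E.pref i).desired
  have hU : ∀ B i p, 0 ≤ srxU E B i p := fun B i p =>
    VoterPref.margUtil_nonneg (fun g hg j => (hpos i g hg j).le) B p
  have hspent := sum_state_budget_ge (D := D) hbudget.le (fun p => (hunit p).symm ▸ zero_le_one)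
    hU (fun B i hi p hp => VoterPref.margUtil_eq_zero_of_notMem_desired
      (fun h => hp (mem_biUnion.mpr ⟨i, hi, h⟩)) B) (Fintype.card A)
  have hT : (T.card : ℝ) ≤ E.budget / Fintype.card V * S.card := by simpa [hunit] using hco.1
  by_contra! hlt
  have hS_budget : 1 ≤ ∑ i ∈ S, (state E (srxU E) (Fintype.card A)).2 i := by
    have : ((D ∩ SRX E).card : ℝ) + 1 ≤ T.card := by exact_mod_cast hlt
    simp only [hunit, sum_const, nsmul_eq_mul, mul_one] at hspent
    change _ - ((D ∩ SRX E).card : ℝ) ≤ _ at hspent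
    linarith
  obtain ⟨i₀, hi₀⟩ : S.Nonempty := nonempty_of_sum_ne_zero (zero_lt_one.trans_le hS_budget).ne'
  obtain ⟨p, hpT, hpB⟩ : ∃ p ∈ T, p ∉ SRX E := by
    by_contra! hTB
    exact hlt.not_ge (card_le_card fun p hp =>
      mem_inter.mpr ⟨mem_biUnion.mpr ⟨i₀, hi₀, hco.2.1 i₀ hi₀ hp⟩, hTB p hp⟩)
  exact not_affordable_of_notMem_mechOutput (srxU E) hpB
    (exists_affordable_of_cost_le_sum (state_budget_nonneg hbudget.le _) (fun i => hU _ i p)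
      (fun i hi => VoterPref.margUtil_pos (hpos i) (hco.2.1 i hi hpT) hpB)
      ((hunit p).trans_le hS_budget))

/-- Under unit costs, if all voters' marginal utilities are strictly positive,
then SRX satisfies Strong-BPJR with substitutes: for every group `S` that is
`T`-cohesive with substitutes, the SRX output `B` satisfies
`|(∪_{i∈S} A(i)) ∩ B| ≥ |T|`. -/
theorem srx_StrongBPJR_under_unit_cost
    {V A : Type*} [Fintype V] [Fintype A] [DecidableEq A] [LinearOrder A]
    (E : PB V A) (I : ℝ)
    (hV : 0 < Fintype.card V)
    (hbudget : 0 < E.budget)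
    (hunit : ∀ p : A, E.cost p = 1)
    (hvalid : ∀ i : V, (E.pref i).Valid)
    (hI : 0 < I)
    (hfirst : ∀ i : V, ∀ g ∈ (E.pref i).parts, (E.pref i).margU g 1 = I)
    (hpos : ∀ i : V, ∀ g ∈ (E.pref i).parts, ∀ k : ℕ, 0 < (E.pref i).margU g k)
    (S : Finset V) (T : Finset A)
    (hco : TCohesiveSub E S T) :
    T.card ≤ ((S.biUnion fun i => (E.pref i).desired) ∩ SRX E).card :=
  srx_StrongBPJR_under_unit_cost_general E hbudget hunit hpos S T hco
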